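/- Let 1 ≤ p ≤ 2, let Ω, Σ ⊆ ℝ^{d+1}_+ be measurable sets with μ_α(Ω) < ∞ and μ_α(Σ) < ∞, and let ψ ∈ L^1_α ∩ L^p_α be bandlimited to Σ. Then ‖ψ·χ_Ω‖_{α,p} ≤ (μ_α(Σ))^{1/p} (μ_α(Ω))^{1/p} ‖ψ‖_{α,p}. -/

import Mathlib

open MeasureTheory

noncomputable section

/-- The ambient space ℝ^{d+1} (with Euclidean norm); ℝ^{d+1}_+ is carved out by the measure. -/
abbrev Wsp (d : ℕ) := EuclideanSpace ℝ (Fin (d + 1))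

/-- Density of the Weinstein measure μ_α:
x ↦ x_{d+1}^{2α+1} / ((2π)^d 2^{2α} Γ(α+1)^2). -/
def Wdensity (d : ℕ) (α : ℝ) (x : Wsp d) : ENNReal :=
  ENNReal.ofReal (Real.rpow (x (Fin.last d)) (2 * α + 1) /
    ((2 * Real.pi) ^ d * Real.rpow 2 (2 * α) * Real.Gamma (α + 1) ^ 2))

/-- The measure μ_α on ℝ^{d+1}_+ = ℝ^d × (0,∞). -/
def Wmeasure (d : ℕ) (α : ℝ) : Measure (Wsp d) :=
  ((volume : Measure (Wsp d)).restrict {x : Wsp d | 0 < x (Fin.last d)}).withDensity (Wdensity d α)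

/-- The normalized Bessel function j_α(u) = Γ(α+1) ∑ (-1)^k (u/2)^{2k} / (k! Γ(α+k+1)). -/
def besselNorm (α u : ℝ) : ℝ :=
  Real.Gamma (α + 1) *
    ∑' k : ℕ, (-1 : ℝ) ^ k * (u / 2) ^ (2 * k) / (k.factorial * Real.Gamma (α + k + 1))

/-- The Weinstein kernel Λ_α(x, λ) = e^{-i⟨x',λ'⟩} j_α(x_{d+1} λ_{d+1}). -/
def WKernel (d : ℕ) (α : ℝ) (x lam : Wsp d) : ℂ :=
  Complex.exp (-Complex.I * ((∑ i : Fin d, x (Fin.castSucc i) * lam (Fin.castSucc i) : ℝ) : ℂ)) *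
    ((besselNorm α (x (Fin.last d) * lam (Fin.last d)) : ℝ) : ℂ)

/-- The Weinstein transform F_α(φ)(λ) = ∫ φ(x) Λ_α(x,λ) dμ_α(x). -/
def WT (d : ℕ) (α : ℝ) (φ : Wsp d → ℂ) (lam : Wsp d) : ℂ :=
  ∫ x, φ x * WKernel d α x lam ∂(Wmeasure d α)

/-- f is ε-concentrated to E in L^r_α-norm: ‖f - f·χ_E‖_{α,r} ≤ ε ‖f‖_{α,r}. -/
def Concentrated (d : ℕ) (α : ℝ) (r : ENNReal) (ε : ℝ) (f : Wsp d → ℂ) (E : Set (Wsp d)) :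
    Prop :=
  eLpNorm (fun x => f x - E.indicator f x) r (Wmeasure d α) ≤
    ENNReal.ofReal ε * eLpNorm f r (Wmeasure d α)

/-- The operator Q_Σφ(x) = ∫_Σ F_α(φ)(λ) conj(Λ_α(x,λ)) dμ_α(λ). -/
def Qop (d : ℕ) (α : ℝ) (T : Set (Wsp d)) (φ : Wsp d → ℂ) (x : Wsp d) : ℂ :=
  ∫ lam in T, WT d α φ lam * (starRingEnd ℂ) (WKernel d α x lam) ∂(Wmeasure d α)

/-- ψ is bandlimited to Σ: F_α(ψ) vanishes a.e. outside Σ and ψ = Q_Σψ a.e. -/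
def Bandlimited (d : ℕ) (α : ℝ) (T : Set (Wsp d)) (ψ : Wsp d → ℂ) : Prop :=
  (∀ᵐ lam ∂(Wmeasure d α), lam ∉ T → WT d α ψ lam = 0) ∧
  (∀ᵐ x ∂(Wmeasure d α), ψ x = Qop d α T ψ x)

/-!
The Bessel factor of the kernel has the Poisson integral representation
`j_α(u) ∫₀¹ (1 - t²)^(α - 1/2) dt = ∫₀¹ (1 - t²)^(α - 1/2) cos (u t) dt`, obtained by integrating
the cosine series termwise against the moments of the weight; hence `|Λ_α| ≤ 1`.

Write `S = ‖F_α ψ‖_{L¹(Σ)}`. Since `|Λ_α| ≤ 1`, the reproducing formula `ψ = Q_Σ ψ` gives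
`|ψ| ≤ S` a.e., so `‖ψ χ_Ω‖_p ≤ S μ(Ω)^(1/p)`, and `S ≤ ‖ψ‖₁ μ(Σ)` is finite. Cauchy–Schwarz on
`Σ`, the Plancherel identity `‖F_α ψ‖_{L²(Σ)} = ‖ψ‖₂` (Fubini plus the reproducing formula) and
`‖ψ‖₂² ≤ ‖ψ‖_∞^(2-p) ‖ψ‖_p^p` give `S² ≤ S^(2-p) ‖ψ‖_p^p μ(Σ)`, that is `S ≤ μ(Σ)^(1/p) ‖ψ‖_p`.
-/

section LpBounds

open ENNReal

variable {X E : Type*} [MeasurableSpace X] [NormedAddCommGroup E] {μ : Measure X} {f : X → E}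

theorem eLpNorm'_rpow_le_of_ae_enorm_le {C : ℝ≥0∞} (hC : ∀ᵐ x ∂μ, ‖f x‖ₑ ≤ C) (hC_top : C ≠ ⊤)
    {p q : ℝ} (hp : 0 < p) (hpq : p ≤ q) :
    eLpNorm' f q μ ^ q ≤ C ^ (q - p) * eLpNorm' f p μ ^ p := by
  rw [← lintegral_rpow_enorm_eq_rpow_eLpNorm' (hp.trans_le hpq),
    ← lintegral_rpow_enorm_eq_rpow_eLpNorm' hp,
    ← lintegral_const_mul' _ _ (rpow_ne_top_of_nonneg (sub_nonneg.2 hpq) hC_top)]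
  refine lintegral_mono_ae (hC.mono fun x hx => ?_)
  calc ‖f x‖ₑ ^ q = ‖f x‖ₑ ^ (q - p) * ‖f x‖ₑ ^ p := by
        rw [← rpow_add_of_nonneg _ _ (sub_nonneg.2 hpq) hp.le, sub_add_cancel]
    _ ≤ C ^ (q - p) * ‖f x‖ₑ ^ p := by gcongr

theorem eLpNorm_indicator_le_of_ae_enorm_le {C : ℝ≥0∞} (hC : ∀ᵐ x ∂μ, ‖f x‖ₑ ≤ C)
    (s : Set X) (p : ℝ≥0∞) : eLpNorm (s.indicator f) p μ ≤ C * μ s ^ (1 / p.toReal) := by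
  refine (eLpNorm_mono_enorm_ae (hC.mono fun x hx => ?_)).trans (eLpNorm_indicator_const_le C p)
  simp only [enorm_indicator_eq_indicator_enorm, enorm_eq_self]
  exact Set.indicator_le_indicator hx

theorem ENNReal.rpow_le_of_rpow_le_rpow_sub_mul {a c : ℝ≥0∞} (ha : a ≠ ⊤) {p q : ℝ} (hp : 0 < p)
    (h : a ^ q ≤ a ^ (q - p) * c) : a ^ p ≤ c := by
  rcases eq_or_ne a 0 with rfl | ha0
  · simp [zero_rpow_of_pos hp]
  rw [show a ^ q = a ^ (q - p) * a ^ p by rw [← rpow_add _ _ ha0 ha, sub_add_cancel]] at h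
  exact (ENNReal.mul_le_mul_iff_right (rpow_pos (pos_iff_ne_zero.2 ha0) ha).ne'
    (rpow_ne_top_of_ne_zero ha0 ha)).1 h

end LpBounds

section KernelTransform

open ENNReal
open scoped ComplexConjugate

variable {X Y 𝕜 : Type*} [RCLike 𝕜] {K : X → Y → 𝕜}

def kernelTransform [MeasurableSpace X] (μ : Measure X) (K : X → Y → 𝕜)
    (f : X → 𝕜) (y : Y) : 𝕜 :=
  ∫ x, f x * K x y ∂μ

def kernelTransformAdjoint [MeasurableSpace Y] (ν : Measure Y) (K : X → Y → 𝕜)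
    (g : Y → 𝕜) (x : X) : 𝕜 :=
  ∫ y, g y * conj (K x y) ∂ν

theorem enorm_kernelTransformAdjoint_le [MeasurableSpace Y] {ν : Measure Y}
    (hK : ∀ x y, ‖K x y‖ ≤ 1) (g : Y → 𝕜) (x : X) :
    ‖kernelTransformAdjoint ν K g x‖ₑ ≤ eLpNorm g 1 ν := by
  rw [eLpNorm_one_eq_lintegral_enorm]
  refine (enorm_integral_le_lintegral_enorm _).trans (lintegral_mono fun y => ?_)
  rw [enorm_mul, RCLike.enorm_conj, ← ofReal_norm (K x y)]
  exact mul_le_of_le_one_right' (ENNReal.ofReal_le_one.2 (hK x y))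

variable [MeasurableSpace X] {μ : Measure X} {f : X → 𝕜}

theorem ae_enorm_le_of_reproducing [MeasurableSpace Y] {ν : Measure Y} {g : Y → 𝕜}
    (hK : ∀ x y, ‖K x y‖ ≤ 1) (hrep : f =ᵐ[μ] kernelTransformAdjoint ν K g) :
    ∀ᵐ x ∂μ, ‖f x‖ₑ ≤ eLpNorm g 1 ν :=
  hrep.mono fun x hx => hx ▸ enorm_kernelTransformAdjoint_le hK g x

theorem norm_kernelTransform_le (hK : ∀ x y, ‖K x y‖ ≤ 1) (hf : Integrable f μ) (y : Y) :
    ‖kernelTransform μ K f y‖ ≤ ∫ x, ‖f x‖ ∂μ :=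
  norm_integral_le_of_norm_le hf.norm <| .of_forall fun x => by
    simpa [norm_mul] using mul_le_of_le_one_right (norm_nonneg (f x)) (hK x y)

variable [MeasurableSpace Y] {ν : Measure Y}

theorem aestronglyMeasurable_kernelTransform [SFinite μ] [SFinite ν]
    (hK : AEStronglyMeasurable (Function.uncurry K) (μ.prod ν)) (hf : AEStronglyMeasurable f μ) :
    AEStronglyMeasurable (kernelTransform μ K f) ν :=
  (hf.comp_snd.mul hK.prod_swap).integral_prod_right'

variable [SFinite μ] [IsFiniteMeasure ν]

theorem integrable_conj_mul_kernelTransform_prod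
    (hK_meas : AEStronglyMeasurable (Function.uncurry K) (μ.prod ν)) (hK : ∀ x y, ‖K x y‖ ≤ 1)
    (hf : Integrable f μ) :
    Integrable (fun z : Y × X => conj (f z.2) * (kernelTransform μ K f z.1 * conj (K z.2 z.1)))
      (ν.prod μ) := by
  refine ((integrable_const (∫ x, ‖f x‖ ∂μ)).mul_prod hf.norm).mono' ?_ (.of_forall ?_)
  · exact hf.1.comp_snd.star.mul
      ((aestronglyMeasurable_kernelTransform hK_meas hf.1).comp_fst.mul hK_meas.prod_swap.star)
  · rintro ⟨y, x⟩
    simp only [norm_mul, RCLike.norm_conj]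
    rw [mul_comm]
    gcongr
    exact (mul_le_of_le_one_right (norm_nonneg _) (hK x y)).trans (norm_kernelTransform_le hK hf y)

theorem integrable_norm_sq_of_reproducing
    (hK_meas : AEStronglyMeasurable (Function.uncurry K) (μ.prod ν)) (hK : ∀ x y, ‖K x y‖ ≤ 1)
    (hf : Integrable f μ) (hrep : f =ᵐ[μ] kernelTransformAdjoint ν K (kernelTransform μ K f)) :
    Integrable (fun x => ‖f x‖ ^ 2) μ := by
  refine (integrable_conj_mul_kernelTransform_prod hK_meas hK hf).integral_prod_right.norm.congr ?_
  filter_upwards [hrep] with x hx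
  rw [integral_const_mul, ← kernelTransformAdjoint, ← hx, norm_mul, RCLike.norm_conj, sq]

theorem integral_norm_sq_kernelTransform
    (hK_meas : AEStronglyMeasurable (Function.uncurry K) (μ.prod ν)) (hK : ∀ x y, ‖K x y‖ ≤ 1)
    (hf : Integrable f μ) (hrep : f =ᵐ[μ] kernelTransformAdjoint ν K (kernelTransform μ K f)) :
    ∫ y, ‖kernelTransform μ K f y‖ ^ 2 ∂ν = ∫ x, ‖f x‖ ^ 2 ∂μ := by
  set g := kernelTransform μ K f
  have hF := integrable_conj_mul_kernelTransform_prod hK_meas hK hf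
  have hF_left (y : Y) : ∫ x, conj (f x) * (g y * conj (K x y)) ∂μ = g y * conj (g y) := by
    simp only [g, kernelTransform, ← integral_const_mul, ← integral_conj, map_mul]
    congr 1 with x
    ring
  have hF_right : (fun x => ∫ y, conj (f x) * (g y * conj (K x y)) ∂ν) =ᵐ[μ]
      fun x => conj (f x) * f x := by
    filter_upwards [hrep] with x hx
    rw [integral_const_mul, ← kernelTransformAdjoint, ← hx]
  have h : ((∫ y, ‖g y‖ ^ 2 ∂ν : ℝ) : 𝕜) = ((∫ x, ‖f x‖ ^ 2 ∂μ : ℝ) : 𝕜) := calc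
    _ = ∫ y, g y * conj (g y) ∂ν := by simp only [← integral_ofReal, RCLike.mul_conj]; norm_cast
    _ = ∫ x, conj (f x) * f x ∂μ := by
      simp only [← hF_left, integral_congr_ae hF_right,
        integral_integral_swap (f := fun y x => conj (f x) * (g y * conj (K x y))) hF]
    _ = _ := by simp only [← integral_ofReal, mul_comm (conj _), RCLike.mul_conj]; norm_cast
  exact_mod_cast h

theorem eLpNorm_two_kernelTransform
    (hK_meas : AEStronglyMeasurable (Function.uncurry K) (μ.prod ν)) (hK : ∀ x y, ‖K x y‖ ≤ 1)
    (hf : Integrable f μ) (hrep : f =ᵐ[μ] kernelTransformAdjoint ν K (kernelTransform μ K f)) :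
    eLpNorm (kernelTransform μ K f) 2 ν = eLpNorm f 2 μ := by
  have hg : MemLp (kernelTransform μ K f) 2 ν :=
    .of_bound (aestronglyMeasurable_kernelTransform hK_meas hf.1) _
      (.of_forall (norm_kernelTransform_le hK hf))
  rw [hg.eLpNorm_eq_integral_rpow_norm two_ne_zero ofNat_ne_top,
    ((memLp_two_iff_integrable_sq_norm hf.1).2 (integrable_norm_sq_of_reproducing hK_meas hK hf
      hrep)).eLpNorm_eq_integral_rpow_norm two_ne_zero ofNat_ne_top]
  simp only [toReal_ofNat, Real.rpow_two, integral_norm_sq_kernelTransform hK_meas hK hf hrep]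

theorem eLpNorm_one_kernelTransform_le
    (hK_meas : AEStronglyMeasurable (Function.uncurry K) (μ.prod ν)) (hK : ∀ x y, ‖K x y‖ ≤ 1)
    (hf : Integrable f μ) (hrep : f =ᵐ[μ] kernelTransformAdjoint ν K (kernelTransform μ K f))
    {p : ℝ≥0∞} (hp0 : p ≠ 0) (hp2 : p ≤ 2) :
    eLpNorm (kernelTransform μ K f) 1 ν ≤ eLpNorm f p μ * ν Set.univ ^ (1 / p.toReal) := by
  set g := kernelTransform μ K f
  set S := eLpNorm g 1 ν
  have hg_meas : AEStronglyMeasurable g ν := aestronglyMeasurable_kernelTransform hK_meas hf.1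
  have hS_top : S ≠ ⊤ :=
    (MemLp.of_bound hg_meas _ (.of_forall (norm_kernelTransform_le hK hf))).eLpNorm_ne_top
  have hf_le : ∀ᵐ x ∂μ, ‖f x‖ₑ ≤ S := ae_enorm_le_of_reproducing hK hrep
  have hp_top : p ≠ ⊤ := ne_top_of_le_ne_top ofNat_ne_top hp2
  set r := p.toReal
  have hr : 0 < r := toReal_pos hp0 hp_top
  have hr2 : r ≤ 2 := by simpa using toReal_mono ofNat_ne_top hp2
  have hS_sq : S ^ (2 : ℝ) ≤ S ^ (2 - r) * (eLpNorm f p μ ^ r * ν Set.univ) := calc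
    S ^ (2 : ℝ) ≤ (eLpNorm g 2 ν * ν Set.univ ^ (1 / 2 : ℝ)) ^ (2 : ℝ) := by
      gcongr
      convert eLpNorm_le_eLpNorm_mul_rpow_measure_univ one_le_two hg_meas using 3
      norm_num
    _ = eLpNorm' f 2 μ ^ (2 : ℝ) * ν Set.univ := by
      rw [eLpNorm_two_kernelTransform hK_meas hK hf hrep,
        eLpNorm_eq_eLpNorm' two_ne_zero ofNat_ne_top, mul_rpow_of_nonneg _ _ zero_le_two,
        ← rpow_mul]
      norm_num
    _ ≤ S ^ (2 - r) * eLpNorm' f r μ ^ r * ν Set.univ := by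
      gcongr
      exact eLpNorm'_rpow_le_of_ae_enorm_le hf_le hS_top hr hr2
    _ = S ^ (2 - r) * (eLpNorm f p μ ^ r * ν Set.univ) := by
      rw [eLpNorm_eq_eLpNorm' hp0 hp_top, mul_assoc]
  calc S = (S ^ r) ^ (1 / r) := by rw [← rpow_mul, mul_one_div_cancel hr.ne', rpow_one]
    _ ≤ (eLpNorm f p μ ^ r * ν Set.univ) ^ (1 / r) := by
      gcongr
      exact ENNReal.rpow_le_of_rpow_le_rpow_sub_mul hS_top hr hS_sq
    _ = eLpNorm f p μ * ν Set.univ ^ (1 / r) := by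
      rw [mul_rpow_of_nonneg _ _ (by positivity), ← rpow_mul, mul_one_div_cancel hr.ne', rpow_one]

theorem eLpNorm_indicator_le_of_reproducing
    (hK_meas : AEStronglyMeasurable (Function.uncurry K) (μ.prod ν)) (hK : ∀ x y, ‖K x y‖ ≤ 1)
    (hf : Integrable f μ) (hrep : f =ᵐ[μ] kernelTransformAdjoint ν K (kernelTransform μ K f))
    {p : ℝ≥0∞} (hp0 : p ≠ 0) (hp2 : p ≤ 2) (s : Set X) :
    eLpNorm (s.indicator f) p μ ≤
      ν Set.univ ^ (1 / p.toReal) * μ s ^ (1 / p.toReal) * eLpNorm f p μ := by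
  have hf_le := ae_enorm_le_of_reproducing hK hrep
  calc eLpNorm (s.indicator f) p μ ≤ eLpNorm (kernelTransform μ K f) 1 ν * μ s ^ (1 / p.toReal) :=
        eLpNorm_indicator_le_of_ae_enorm_le hf_le s p
    _ ≤ eLpNorm f p μ * ν Set.univ ^ (1 / p.toReal) * μ s ^ (1 / p.toReal) := by
        gcongr
        exact eLpNorm_one_kernelTransform_le hK_meas hK hf hrep hp0 hp2
    _ = _ := by ring

end KernelTransform

section PoissonIntegral

open Real Set intervalIntegral
open scoped Interval

theorem intervalIntegrable_pow_mul_one_sub_sq_rpow {r : ℝ} (hr : -1 < r) (m : ℕ) :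
    IntervalIntegrable (fun t => t ^ m * (1 - t ^ 2) ^ r) volume 0 1 := by
  have h_sing : IntervalIntegrable (fun t => (1 - t) ^ r) volume 0 1 := by
    simpa using ((intervalIntegrable_rpow' (a := 0) (b := 1) hr).comp_sub_left 1).symm
  have h_cont : ContinuousOn (fun t : ℝ => t ^ m * (1 + t) ^ r) (uIcc 0 1) := by
    refine (continuousOn_pow m).mul (ContinuousOn.rpow_const (by fun_prop) fun t ht => ?_)
    rw [uIcc_of_le zero_le_one] at ht
    exact Or.inl (by linarith [ht.1])
  -- `(1 - t²)^r = (1 - t)^r (1 + t)^r`, and only the first factor is singular at `t = 1`.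
  refine (h_sing.continuousOn_mul h_cont).congr fun t ht => ?_
  rw [uIoc_of_le zero_le_one] at ht
  have h1 : 0 ≤ 1 + t := by linarith [ht.1]
  have h2 : 0 ≤ 1 - t := by linarith [ht.2]
  simp only [mul_assoc, ← mul_rpow h1 h2]
  ring_nf

theorem intervalIntegrable_one_sub_sq_rpow {r : ℝ} (hr : -1 < r) :
    IntervalIntegrable (fun t => (1 - t ^ 2) ^ r) volume 0 1 := by
  simpa using intervalIntegrable_pow_mul_one_sub_sq_rpow hr 0

theorem norm_one_sub_sq_rpow_mul_le {t c C : ℝ} (ht : t ∈ Ioc 0 1) (r : ℝ) (hc : ‖c‖ ≤ C) :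
    ‖(1 - t ^ 2) ^ r * c‖ ≤ (1 - t ^ 2) ^ r * C := by
  have hw : 0 ≤ (1 - t ^ 2) ^ r := rpow_nonneg (by nlinarith [ht.1, ht.2]) _
  rw [norm_mul, Real.norm_of_nonneg hw]
  exact mul_le_mul_of_nonneg_left hc hw

def besselPoissonMoment (α : ℝ) (k : ℕ) : ℝ :=
  ∫ t in (0 : ℝ)..1, t ^ (2 * k) * (1 - t ^ 2) ^ (α - 1 / 2)

variable {α : ℝ}

theorem besselPoissonMoment_succ (hα : -1 / 2 < α) (k : ℕ) :
    (2 * α + 2 * k + 2) * besselPoissonMoment α (k + 1) =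
      (2 * k + 1) * besselPoissonMoment α k := by
  -- Integrate by parts: `t ^ (2k+1) (1 - t²) ^ (α + 1/2)` vanishes at both ends of `[0, 1]`.
  let w : ℝ → ℝ := fun t => (1 - t ^ 2) ^ (α - 1 / 2)
  have hw (j : ℕ) : IntervalIntegrable (fun t => t ^ (2 * j) * w t) volume 0 1 :=
    intervalIntegrable_pow_mul_one_sub_sq_rpow (by linarith) _
  have hderiv : ∀ t ∈ Ioo (0 : ℝ) 1,
      HasDerivAt (fun t => t ^ (2 * k + 1) * (1 - t ^ 2) ^ (α + 1 / 2))
        ((2 * k + 1) * (t ^ (2 * k) * w t) -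
          (2 * α + 2 * k + 2) * (t ^ (2 * (k + 1)) * w t)) t := by
    intro t ht
    have hb : 0 < 1 - t ^ 2 := by nlinarith [ht.1, ht.2]
    refine ((hasDerivAt_pow (2 * k + 1) t).mul (((hasDerivAt_pow 2 t).const_sub 1).rpow_const
      (p := α + 1 / 2) (Or.inl hb.ne'))).congr_deriv ?_
    rw [show α + 1 / 2 - 1 = α - 1 / 2 by ring, show α + 1 / 2 = α - 1 / 2 + 1 by ring,
      rpow_add_one hb.ne']
    push_cast
    ring
  have hcont : ContinuousOn (fun t : ℝ => t ^ (2 * k + 1) * (1 - t ^ 2) ^ (α + 1 / 2)) (Icc 0 1) :=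
    ((continuous_pow _).mul ((continuous_const.sub (continuous_pow 2)).rpow_const
      fun _ => Or.inr (by linarith))).continuousOn
  have h := integral_eq_sub_of_hasDerivAt_of_le zero_le_one hcont hderiv
    (((hw k).const_mul _).sub ((hw (k + 1)).const_mul _))
  rw [integral_sub ((hw k).const_mul _) ((hw (k + 1)).const_mul _),
    intervalIntegral.integral_const_mul, intervalIntegral.integral_const_mul] at h
  norm_num [zero_rpow (by linarith : α + 1 / 2 ≠ 0)] at h
  unfold besselPoissonMoment
  linarith

theorem besselPoissonMoment_mul (hα : -1 / 2 < α) (k : ℕ) :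
    besselPoissonMoment α k * (4 ^ k * k.factorial * Gamma (α + k + 1)) =
      (2 * k).factorial * Gamma (α + 1) * besselPoissonMoment α 0 := by
  induction k with
  | zero => simp [mul_comm]
  | succ k ih =>
    have hΓ : Gamma (α + ↑(k + 1) + 1) = (α + k + 1) * Gamma (α + k + 1) := by
      rw [Nat.cast_succ, ← Gamma_add_one (by linarith [(Nat.cast_nonneg k : (0 : ℝ) ≤ k)])]
      ring_nf
    rw [hΓ, show 2 * (k + 1) = 2 * k + 1 + 1 by ring, Nat.factorial_succ, Nat.factorial_succ,
      Nat.factorial_succ]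
    push_cast
    linear_combination (2 * (k + 1) * 4 ^ k * k.factorial * Gamma (α + k + 1)) *
      besselPoissonMoment_succ hα k + (2 * (k + 1) * (2 * k + 1)) * ih

theorem besselPoissonMoment_zero_pos (hα : -1 / 2 < α) : 0 < besselPoissonMoment α 0 := by
  refine intervalIntegral_pos_of_pos_on
    (intervalIntegrable_pow_mul_one_sub_sq_rpow (by linarith) 0) (fun t ht => ?_) zero_lt_one
  simpa using rpow_pos_of_pos (by nlinarith [ht.1, ht.2] : 0 < 1 - t ^ 2) (α - 1 / 2)

theorem integral_mul_cosSeriesTerm (hα : -1 / 2 < α) (u : ℝ) (k : ℕ) :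
    ∫ t in (0 : ℝ)..1,
        (1 - t ^ 2) ^ (α - 1 / 2) * ((-1) ^ k * (u * t) ^ (2 * k) / (2 * k).factorial) =
      Gamma (α + 1) * ((-1) ^ k * (u / 2) ^ (2 * k) / (k.factorial * Gamma (α + k + 1))) *
        besselPoissonMoment α 0 := by
  have hD : (4 : ℝ) ^ k * k.factorial * Gamma (α + k + 1) ≠ 0 := by
    have := Gamma_pos_of_pos (by linarith [(Nat.cast_nonneg k : (0 : ℝ) ≤ k)] : 0 < α + k + 1)
    positivity
  have hJ : besselPoissonMoment α k =
      (2 * k).factorial * Gamma (α + 1) * besselPoissonMoment α 0 /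
        (4 ^ k * k.factorial * Gamma (α + k + 1)) := by
    rw [eq_div_iff hD]
    exact besselPoissonMoment_mul hα k
  calc _ = (-1) ^ k * u ^ (2 * k) / (2 * k).factorial * besselPoissonMoment α k := by
        rw [besselPoissonMoment, ← intervalIntegral.integral_const_mul]
        congr 1 with t
        ring
    _ = _ := by
        rw [hJ, div_pow, pow_mul (2 : ℝ)]
        field_simp
        norm_num

theorem besselNorm_mul_besselPoissonMoment_zero (hα : -1 / 2 < α) (u : ℝ) :
    besselNorm α u * besselPoissonMoment α 0 =
      ∫ t in (0 : ℝ)..1, (1 - t ^ 2) ^ (α - 1 / 2) * cos (u * t) := by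
  have hw := intervalIntegrable_one_sub_sq_rpow (by linarith : -1 < α - 1 / 2)
  have h_bound (k : ℕ) : ∀ t ∈ Ι (0 : ℝ) 1,
      ‖(1 - t ^ 2) ^ (α - 1 / 2) * ((-1) ^ k * (u * t) ^ (2 * k) / (2 * k).factorial)‖ ≤
        (1 - t ^ 2) ^ (α - 1 / 2) * (|u| ^ (2 * k) / (2 * k).factorial) := by
    intro t ht
    rw [uIoc_of_le zero_le_one] at ht
    refine norm_one_sub_sq_rpow_mul_le ht _ ?_
    rw [norm_div, norm_mul, norm_pow, norm_neg, norm_one, one_pow, one_mul, norm_pow,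
      Real.norm_natCast, norm_mul, Real.norm_eq_abs, Real.norm_of_nonneg ht.1.le]
    exact div_le_div_of_nonneg_right (pow_le_pow_left₀ (mul_nonneg (abs_nonneg u) ht.1.le)
      (mul_le_of_le_one_right (abs_nonneg u) ht.2) _) (by positivity)
  have h_summable (t : ℝ) : Summable fun k : ℕ =>
      (1 - t ^ 2) ^ (α - 1 / 2) * (|u| ^ (2 * k) / (2 * k).factorial) :=
    (Real.hasSum_cosh |u|).summable.mul_left _
  have hsum := intervalIntegral.hasSum_integral_of_dominated_convergence
    (f := fun t => (1 - t ^ 2) ^ (α - 1 / 2) * cos (u * t))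
    (F := fun k t =>
      (1 - t ^ 2) ^ (α - 1 / 2) * ((-1) ^ k * (u * t) ^ (2 * k) / (2 * k).factorial))
    (fun k t => (1 - t ^ 2) ^ (α - 1 / 2) * (|u| ^ (2 * k) / (2 * k).factorial))
    (fun k => (Measurable.aestronglyMeasurable (by fun_prop)))
    (fun k => .of_forall (h_bound k))
    (.of_forall fun t _ => by exact h_summable t)
    (by simpa only [tsum_mul_left] using hw.mul_const _)
    (.of_forall fun t _ => by exact (hasSum_cos (u * t)).mul_left _)
  simp only [integral_mul_cosSeriesTerm hα] at hsum
  rw [besselNorm, ← tsum_mul_left, ← tsum_mul_right]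
  exact hsum.tsum_eq

theorem abs_besselNorm_le_one (hα : -1 / 2 < α) (u : ℝ) : |besselNorm α u| ≤ 1 := by
  have hJ := besselPoissonMoment_zero_pos hα
  refine le_of_mul_le_mul_right ?_ hJ
  rw [one_mul, ← abs_of_pos hJ, ← abs_mul, besselNorm_mul_besselPoissonMoment_zero hα,
    abs_of_pos hJ, ← Real.norm_eq_abs]
  have h := norm_integral_le_of_norm_le zero_le_one
    (.of_forall fun t ht => norm_one_sub_sq_rpow_mul_le ht (α - 1 / 2) (abs_cos_le_one (u * t)))
    ((intervalIntegrable_one_sub_sq_rpow (by linarith : -1 < α - 1 / 2)).mul_const 1)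
  simpa [besselPoissonMoment] using h

theorem continuous_besselNorm (hα : -1 / 2 < α) : Continuous (besselNorm α) := by
  have hJ := besselPoissonMoment_zero_pos hα
  have h : besselNorm α = fun u =>
      (∫ t in (0 : ℝ)..1, (1 - t ^ 2) ^ (α - 1 / 2) * cos (u * t)) / besselPoissonMoment α 0 := by
    ext u
    rw [eq_div_iff hJ.ne', besselNorm_mul_besselPoissonMoment_zero hα]
  rw [h]
  refine (continuous_of_dominated_interval (bound := fun t => (1 - t ^ 2) ^ (α - 1 / 2))
    (fun u => Measurable.aestronglyMeasurable (by fun_prop))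
    (fun u => .of_forall fun t ht => by
      simpa using norm_one_sub_sq_rpow_mul_le (by rwa [uIoc_of_le zero_le_one] at ht) _
        (abs_cos_le_one (u * t)))
    (intervalIntegrable_one_sub_sq_rpow (by linarith))
    (.of_forall fun t _ => by fun_prop)).div_const _

end PoissonIntegral

theorem norm_WKernel_le_one {d : ℕ} {α : ℝ} (hα : -1 / 2 < α) (x lam : Wsp d) :
    ‖WKernel d α x lam‖ ≤ 1 := by
  rw [WKernel, norm_mul, Complex.norm_exp, Complex.norm_real]
  simpa using abs_besselNorm_le_one hα _

theorem continuous_WKernel {d : ℕ} {α : ℝ} (hα : -1 / 2 < α) :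
    Continuous (Function.uncurry (WKernel d α)) := by
  have hcoord (i : Fin (d + 1)) : Continuous fun x : Wsp d => x i :=
    (EuclideanSpace.proj i).continuous
  have := continuous_besselNorm hα
  unfold WKernel
  fun_prop

theorem weinstein_bandlimited_timelimit_bound_general
    (d : ℕ) (α : ℝ) (hα : -1/2 < α)
    (p : ℝ) (hp1 : 1 ≤ p) (hp2 : p ≤ 2)
    (Ω T : Set (Wsp d)) (hT : Wmeasure d α T < ⊤)
    (ψ : Wsp d → ℂ) (hψ1 : MemLp ψ 1 (Wmeasure d α))
    (hband : Bandlimited d α T ψ) :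
    eLpNorm (Ω.indicator ψ) (ENNReal.ofReal p) (Wmeasure d α) ≤
      (Wmeasure d α T) ^ (1 / p) * (Wmeasure d α Ω) ^ (1 / p) *
        eLpNorm ψ (ENNReal.ofReal p) (Wmeasure d α) := by
  have : SFinite (Wmeasure d α) := by unfold Wmeasure; infer_instance
  have : IsFiniteMeasure ((Wmeasure d α).restrict T) := isFiniteMeasure_restrict.2 hT.ne
  -- `WT d α` and `Qop d α T` unfold to `kernelTransform` and `kernelTransformAdjoint` for the
  -- kernel `WKernel d α`, with `μ_α` restricted to `T` on the frequency side.
  have h := eLpNorm_indicator_le_of_reproducing (continuous_WKernel hα).aestronglyMeasurable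
    (norm_WKernel_le_one hα) (memLp_one_iff_integrable.1 hψ1) hband.2
    (ENNReal.ofReal_pos.2 (by linarith)).ne' (by simpa using ENNReal.ofReal_le_ofReal hp2) Ω
  rwa [Measure.restrict_apply_univ, ENNReal.toReal_ofReal (by linarith)] at h

/-- Time-limiting bound for bandlimited functions (Proposition 4.10). -/
theorem weinstein_bandlimited_timelimit_bound
    (d : ℕ) (hd : 1 ≤ d) (α : ℝ) (hα : -1/2 < α)
    (p : ℝ) (hp1 : 1 ≤ p) (hp2 : p ≤ 2)
    (Ω T : Set (Wsp d)) (hΩmeas : MeasurableSet Ω) (hTmeas : MeasurableSet T)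
    (hΩ : Wmeasure d α Ω < ⊤) (hT : Wmeasure d α T < ⊤)
    (ψ : Wsp d → ℂ) (hψ1 : MemLp ψ 1 (Wmeasure d α))
    (hψp : MemLp ψ (ENNReal.ofReal p) (Wmeasure d α))
    (hband : Bandlimited d α T ψ) :
    eLpNorm (Ω.indicator ψ) (ENNReal.ofReal p) (Wmeasure d α) ≤
      (Wmeasure d α T) ^ (1 / p) * (Wmeasure d α Ω) ^ (1 / p) *
        eLpNorm ψ (ENNReal.ofReal p) (Wmeasure d α) :=
  weinstein_bandlimited_timelimit_bound_general d α hα p hp1 hp2 Ω T hT ψ hψ1 hband
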